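/- The translations between nested sequents and labeled tree sequents are mutually inverse on nested sequents: for every nested sequent Φ, 𝔑(𝔏(Φ)) = Φ. -/

import Mathlib

/-- Nested sequents over formulae `Fml`, variables `Var`, and labels `Lab`:
a nested sequent is a flat sequent `Γ; Θ ⊢ Δ` together with a (possibly empty) list
of labeled children `[Ψ₁]_{w₁}, …, [Ψₘ]_{wₘ}`. -/
inductive Nested (Fml Var Lab : Type) : Type
  | node (Γ : Multiset Fml) (Θ : Multiset Var) (Δ : Multiset Fml)
      (children : List (Lab × Nested Fml Var Lab)) : Nested Fml Var Lab

/-- A labeled sequent: relational atoms `wRu`, domain atoms `x ∈ D(w)` and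
labeled formulae `w : φ` on the left and on the right. -/
structure LSeq (Fml Var Lab : Type) : Type where
  rel : List (Lab × Lab)
  dom : Multiset (Lab × Var)
  left : Multiset (Lab × Fml)
  right : Multiset (Lab × Fml)

variable {Fml Var Lab : Type} [DecidableEq Lab]

/-- Composition `⊗` of labeled sequents (multiset/list union componentwise). -/
def LSeq.comp (Λ₁ Λ₂ : LSeq Fml Var Lab) : LSeq Fml Var Lab :=
  ⟨Λ₁.rel ++ Λ₂.rel, Λ₁.dom + Λ₂.dom, Λ₁.left + Λ₂.left, Λ₁.right + Λ₂.right⟩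

/-- The translation `𝔏` from nested sequents (rooted at `v`) to labeled tree sequents. -/
def Ltrans (v : Lab) : Nested Fml Var Lab → LSeq Fml Var Lab
  | .node Γ Θ Δ cs =>
    (cs.attach.map (fun c =>
        LSeq.comp ⟨[(v, c.1.1)], 0, 0, 0⟩ (Ltrans c.1.1 c.1.2))).foldr LSeq.comp
      ⟨[], Θ.map (fun x => (v, x)), Γ.map (fun φ => (v, φ)), Δ.map (fun φ => (v, φ))⟩
termination_by Φ => sizeOf Φ
decreasing_by
  have h := List.sizeOf_lt_of_mem c.2
  obtain ⟨⟨a, b⟩, hc⟩ := c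
  simp only [Prod.mk.sizeOf_spec, Nested.node.sizeOf_spec] at h ⊢
  omega

/-- The translation `𝔑` from labeled tree sequents back to nested sequents, computed
by recursion on the tree structure (here implemented with a fuel parameter bounding
the recursion depth): at node `v` it collects the formulae labeled `v` on each side
and the variables `x` with `x ∈ D(v)`, and recursively translates the subtrees rooted
at the children `z` with `vRz`. -/
def Ntrans : ℕ → Lab → LSeq Fml Var Lab → Nested Fml Var Lab
  | 0, v, Λ =>
      .node ((Λ.left.filter (fun p => p.1 = v)).map Prod.snd)
        ((Λ.dom.filter (fun p => p.1 = v)).map Prod.snd)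
        ((Λ.right.filter (fun p => p.1 = v)).map Prod.snd) []
  | n + 1, v, Λ =>
      .node ((Λ.left.filter (fun p => p.1 = v)).map Prod.snd)
        ((Λ.dom.filter (fun p => p.1 = v)).map Prod.snd)
        ((Λ.right.filter (fun p => p.1 = v)).map Prod.snd)
        ((Λ.rel.filter (fun p => p.1 = v)).map (fun p => (p.2, Ntrans n p.2 Λ)))

/-- The height of a nested sequent (number of nestings). -/
def Nested.height : Nested Fml Var Lab → ℕ
  | .node _ _ _ cs => (cs.attach.map (fun c => c.1.2.height)).foldr max 0 + 1
termination_by Φ => sizeOf Φ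
decreasing_by
  have h := List.sizeOf_lt_of_mem c.2
  obtain ⟨⟨a, b⟩, hc⟩ := c
  simp only [Prod.mk.sizeOf_spec, Nested.node.sizeOf_spec] at h ⊢
  omega

/-- The list of all labels occurring in a nested sequent whose root is labeled `w`. -/
def Nested.labels (w : Lab) : Nested Fml Var Lab → List Lab
  | .node _ _ _ cs => w :: (cs.attach.map (fun c => Nested.labels c.1.1 c.1.2)).flatten
termination_by Φ => sizeOf Φ
decreasing_by
  have h := List.sizeOf_lt_of_mem c.2
  obtain ⟨⟨a, b⟩, hc⟩ := c
  simp only [Prod.mk.sizeOf_spec, Nested.node.sizeOf_spec] at h ⊢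
  omega

/-!
Labeled sequents form a monoid under `⊗`, and keeping only the atoms whose label lies in a set
is a monoid homomorphism. `𝔏` of a node is the product of the edges to its children, the
translations of the children and the flat part at the root. As all labels are distinct,
restricting `𝔏(Φ)` to the root label leaves the flat part and the edges to the children, and
restricting it to the labels of a child `[Ψ]_u` leaves `𝔏_u(Ψ)`. Since `𝔑` started at `u` only
reads atoms whose labels are reachable from `u`, the children of `𝔑(𝔏(Φ))` are the `𝔑(𝔏_u(Ψ))`,
and induction on `Φ` concludes.
-/

open LSeq

section

omit [DecidableEq Lab]

@[induction_eliminator]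
theorem Nested.induction {motive : Nested Fml Var Lab → Prop}
    (node : ∀ Γ Θ Δ cs, (∀ c ∈ cs, motive c.2) → motive (.node Γ Θ Δ cs)) :
    ∀ Φ, motive Φ
  | .node Γ Θ Δ cs => node Γ Θ Δ cs fun c _ => Nested.induction node c.2
termination_by Φ => sizeOf Φ
decreasing_by
  have h := List.sizeOf_lt_of_mem ‹c ∈ cs›
  obtain ⟨a, b⟩ := c
  simp only [Prod.mk.sizeOf_spec, Nested.node.sizeOf_spec] at h ⊢
  omega

theorem Nested.labels_node (w : Lab) (Γ Δ : Multiset Fml) (Θ : Multiset Var)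
    (cs : List (Lab × Nested Fml Var Lab)) :
    Nested.labels w (.node Γ Θ Δ cs) = w :: (cs.map fun c => c.2.labels c.1).flatten := by
  rw [Nested.labels]
  exact congrArg (w :: List.flatten ·)
    (List.attach_map_val (f := fun c : Lab × Nested Fml Var Lab => c.2.labels c.1))

theorem Nested.mem_labels_self (w : Lab) (Φ : Nested Fml Var Lab) : w ∈ Φ.labels w := by
  cases Φ
  rw [Nested.labels_node]
  exact List.mem_cons_self

theorem Nested.labels_node_perm (w : Lab) (Γ Δ : Multiset Fml) (Θ : Multiset Var)
    (l₁ l₂ : List (Lab × Nested Fml Var Lab)) (c : Lab × Nested Fml Var Lab) :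
    ((Nested.node Γ Θ Δ (l₁ ++ c :: l₂)).labels w).Perm
      (w :: (c.2.labels c.1 ++ ((l₁ ++ l₂).map fun d => d.2.labels d.1).flatten)) := by
  rw [Nested.labels_node]
  simpa using ((List.perm_middle (a := c) (l₁ := l₁) (l₂ := l₂)).map
    fun d => d.2.labels d.1).flatten.cons w

section nodup

variable {w : Lab} {Γ Δ : Multiset Fml} {Θ : Multiset Var} {cs : List (Lab × Nested Fml Var Lab)}
  (h : ((Nested.node Γ Θ Δ cs).labels w).Nodup) {c : Lab × Nested Fml Var Lab} (hc : c ∈ cs)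
include h hc

theorem Nested.not_mem_labels_of_mem : w ∉ c.2.labels c.1 := fun hw => by
  rw [Nested.labels_node, List.nodup_cons] at h
  exact h.1 (List.mem_flatten.2 ⟨_, List.mem_map_of_mem hc, hw⟩)

theorem Nested.nodup_labels_of_mem : (c.2.labels c.1).Nodup := by
  rw [Nested.labels_node, List.nodup_cons, List.nodup_flatten] at h
  exact h.2.1 _ (List.mem_map_of_mem hc)

end nodup

theorem Nested.height_lt_of_mem {Γ Δ : Multiset Fml} {Θ : Multiset Var}
    {cs : List (Lab × Nested Fml Var Lab)} {c : Lab × Nested Fml Var Lab} (hc : c ∈ cs) :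
    c.2.height < (Nested.node Γ Θ Δ cs).height := by
  rw [Nested.height, Nat.lt_succ_iff]
  exact List.le_max_of_le' 0 (List.mem_map.2 ⟨⟨c, hc⟩, List.mem_attach _ _, rfl⟩) le_rfl

namespace LSeq

instance : One (LSeq Fml Var Lab) := ⟨⟨[], 0, 0, 0⟩⟩

instance : Mul (LSeq Fml Var Lab) := ⟨comp⟩

theorem one_def : (1 : LSeq Fml Var Lab) = ⟨[], 0, 0, 0⟩ := rfl

theorem mul_def (Λ₁ Λ₂ : LSeq Fml Var Lab) :
    Λ₁ * Λ₂ = ⟨Λ₁.rel ++ Λ₂.rel, Λ₁.dom + Λ₂.dom, Λ₁.left + Λ₂.left, Λ₁.right + Λ₂.right⟩ :=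
  rfl

instance : Monoid (LSeq Fml Var Lab) where
  mul_assoc _ _ _ := by simp only [mul_def, List.append_assoc, add_assoc]
  one_mul _ := by simp only [mul_def, one_def, List.nil_append, zero_add]
  mul_one _ := by simp only [mul_def, one_def, List.append_nil, add_zero]

theorem foldr_comp (l : List (LSeq Fml Var Lab)) (Λ : LSeq Fml Var Lab) :
    l.foldr comp Λ = l.prod * Λ := by
  induction l with
  | nil => exact (one_mul Λ).symm
  | cons _ _ ih => rw [List.prod_cons, mul_assoc, ← ih]; rfl

def edge (a b : Lab) : LSeq Fml Var Lab := ⟨[(a, b)], 0, 0, 0⟩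

def flat (v : Lab) (Γ : Multiset Fml) (Θ : Multiset Var) (Δ : Multiset Fml) :
    LSeq Fml Var Lab :=
  ⟨[], Θ.map (v, ·), Γ.map (v, ·), Δ.map (v, ·)⟩

theorem prod_map_edge {α : Type} (a : Lab) (f : α → Lab) (l : List α) :
    (l.map fun x => (edge a (f x) : LSeq Fml Var Lab)).prod =
      ⟨l.map fun x => (a, f x), 0, 0, 0⟩ := by
  induction l with
  | nil => rfl
  | cons x l ih =>
    rw [List.map_cons, List.prod_cons, ih]
    simp only [mul_def, edge, List.map_cons, List.singleton_append, add_zero]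

/-- Keeps the atoms whose label satisfies `p`; a relational atom `wRu` is kept according to `w`. -/
def restrict (p : Lab → Prop) [DecidablePred p] (Λ : LSeq Fml Var Lab) : LSeq Fml Var Lab :=
  ⟨Λ.rel.filter (p ·.1), Λ.dom.filter (p ·.1), Λ.left.filter (p ·.1), Λ.right.filter (p ·.1)⟩

def supportedOn (S : Lab → Prop) : Submonoid (LSeq Fml Var Lab) where
  carrier := {Λ | (∀ e ∈ Λ.rel, S e.1 ∧ S e.2) ∧ (∀ e ∈ Λ.dom, S e.1) ∧
    (∀ e ∈ Λ.left, S e.1) ∧ (∀ e ∈ Λ.right, S e.1)}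
  one_mem' := by simp [one_def]
  mul_mem' := by
    rintro Λ₁ Λ₂ ⟨h₁, h₂, h₃, h₄⟩ ⟨h₁', h₂', h₃', h₄'⟩
    simp only [Set.mem_ofPred_eq, mul_def, List.mem_append, Multiset.mem_add]
    exact ⟨fun e he => he.elim (h₁ e) (h₁' e), fun e he => he.elim (h₂ e) (h₂' e),
      fun e he => he.elim (h₃ e) (h₃' e), fun e he => he.elim (h₄ e) (h₄' e)⟩

theorem supportedOn_mono {S T : Lab → Prop} (hST : ∀ a, S a → T a) :
    supportedOn (Fml := Fml) (Var := Var) S ≤ supportedOn T := by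
  rintro Λ ⟨h₁, h₂, h₃, h₄⟩
  exact ⟨fun e he => (h₁ e he).imp (hST _) (hST _), fun e he => hST _ (h₂ e he),
    fun e he => hST _ (h₃ e he), fun e he => hST _ (h₄ e he)⟩

theorem edge_mem_supportedOn {S : Lab → Prop} {a b : Lab} (ha : S a) (hb : S b) :
    (edge a b : LSeq Fml Var Lab) ∈ supportedOn S := by
  simp [supportedOn, edge, ha, hb]

theorem flat_mem_supportedOn {S : Lab → Prop} {v : Lab} (hv : S v) (Γ : Multiset Fml)
    (Θ : Multiset Var) (Δ : Multiset Fml) : flat v Γ Θ Δ ∈ supportedOn S := by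
  simp [supportedOn, flat, hv]

variable {p : Lab → Prop} [DecidablePred p]

theorem restrict_one : restrict p (1 : LSeq Fml Var Lab) = 1 := rfl

theorem restrict_mul (Λ₁ Λ₂ : LSeq Fml Var Lab) :
    restrict p (Λ₁ * Λ₂) = restrict p Λ₁ * restrict p Λ₂ := by
  simp only [restrict, mul_def, List.filter_append, Multiset.filter_add]

theorem restrict_list_prod (l : List (LSeq Fml Var Lab)) :
    restrict p l.prod = (l.map (restrict p)).prod :=
  map_list_prod (⟨⟨restrict p, restrict_one⟩, restrict_mul⟩ : LSeq Fml Var Lab →* _) l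

theorem mem_rel_restrict {Λ : LSeq Fml Var Lab} {e : Lab × Lab} :
    e ∈ (restrict p Λ).rel ↔ e ∈ Λ.rel ∧ p e.1 := by
  simp [restrict]

theorem restrict_restrict_of_imp {q : Lab → Prop} [DecidablePred q] (hqp : ∀ a, q a → p a)
    (Λ : LSeq Fml Var Lab) : restrict q (restrict p Λ) = restrict q Λ := by
  have hqp' : ∀ a, (q a ∧ p a ↔ q a) := fun a => and_iff_left_of_imp (hqp a)
  simp only [restrict, List.filter_filter, Multiset.filter_filter, ← Bool.decide_and, hqp']

theorem restrict_eq_self {S : Lab → Prop} {Λ : LSeq Fml Var Lab} (hΛ : Λ ∈ supportedOn S)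
    (hSp : ∀ a, S a → p a) : restrict p Λ = Λ := by
  obtain ⟨h₁, h₂, h₃, h₄⟩ := hΛ
  simp only [restrict]
  rw [List.filter_eq_self.2 fun e he => by simpa using hSp _ (h₁ e he).1,
    Multiset.filter_eq_self.2 fun e he => hSp _ (h₂ e he),
    Multiset.filter_eq_self.2 fun e he => hSp _ (h₃ e he),
    Multiset.filter_eq_self.2 fun e he => hSp _ (h₄ e he)]

theorem restrict_eq_one {S : Lab → Prop} {Λ : LSeq Fml Var Lab} (hΛ : Λ ∈ supportedOn S)
    (hSp : ∀ a, S a → ¬ p a) : restrict p Λ = 1 := by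
  obtain ⟨h₁, h₂, h₃, h₄⟩ := hΛ
  simp only [restrict]
  rw [List.filter_eq_nil_iff.2 fun e he => by simpa using hSp _ (h₁ e he).1,
    Multiset.filter_eq_nil.2 fun e he => hSp _ (h₂ e he),
    Multiset.filter_eq_nil.2 fun e he => hSp _ (h₃ e he),
    Multiset.filter_eq_nil.2 fun e he => hSp _ (h₄ e he)]
  rfl

theorem restrict_edge_of {a : Lab} (ha : p a) (b : Lab) :
    restrict p (edge a b : LSeq Fml Var Lab) = edge a b := by
  simp [restrict, edge, ha]

theorem restrict_edge_of_not {a : Lab} (ha : ¬ p a) (b : Lab) :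
    restrict p (edge a b : LSeq Fml Var Lab) = 1 := by
  simp [restrict, edge, ha, one_def]

end LSeq

theorem Ltrans_node (v : Lab) (Γ : Multiset Fml) (Θ : Multiset Var) (Δ : Multiset Fml)
    (cs : List (Lab × Nested Fml Var Lab)) :
    Ltrans v (.node Γ Θ Δ cs) =
      (cs.map fun c => edge v c.1 * Ltrans c.1 c.2).prod * flat v Γ Θ Δ := by
  rw [Ltrans, foldr_comp]
  exact congrArg (List.prod · * _)
    (List.attach_map_val (f := fun c : Lab × Nested Fml Var Lab => edge v c.1 * Ltrans c.1 c.2))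

theorem Ltrans_mem_supportedOn (w : Lab) (Φ : Nested Fml Var Lab) :
    Ltrans w Φ ∈ supportedOn (· ∈ Φ.labels w) := by
  induction Φ generalizing w with
  | node Γ Θ Δ cs ih =>
    have hsub : ∀ c ∈ cs, ∀ a ∈ c.2.labels c.1, a ∈ (Nested.node Γ Θ Δ cs).labels w :=
      fun c hc a ha => by
        rw [Nested.labels_node]
        exact List.mem_cons_of_mem _ (List.mem_flatten.2 ⟨_, List.mem_map_of_mem hc, ha⟩)
    rw [Ltrans_node]
    refine mul_mem (Submonoid.list_prod_mem _ ?_)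
      (flat_mem_supportedOn (Nested.mem_labels_self _ _) _ _ _)
    simp only [List.mem_map]
    rintro _ ⟨c, hc, rfl⟩
    exact mul_mem
      (edge_mem_supportedOn (Nested.mem_labels_self _ _) (hsub c hc _ (Nested.mem_labels_self _ _)))
      (supportedOn_mono (hsub c hc) (ih c hc c.1))

end

theorem Ntrans_zero (v : Lab) (Λ : LSeq Fml Var Lab) :
    Ntrans 0 v Λ =
      .node ((restrict (· = v) Λ).left.map Prod.snd) ((restrict (· = v) Λ).dom.map Prod.snd)
        ((restrict (· = v) Λ).right.map Prod.snd) [] :=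
  rfl

theorem Ntrans_succ (n : ℕ) (v : Lab) (Λ : LSeq Fml Var Lab) :
    Ntrans (n + 1) v Λ =
      .node ((restrict (· = v) Λ).left.map Prod.snd) ((restrict (· = v) Λ).dom.map Prod.snd)
        ((restrict (· = v) Λ).right.map Prod.snd)
        ((restrict (· = v) Λ).rel.map fun e => (e.2, Ntrans n e.2 Λ)) :=
  rfl

theorem Ntrans_restrict {p : Lab → Prop} [DecidablePred p] (n : ℕ) {v : Lab} (hv : p v)
    {Λ : LSeq Fml Var Lab} (hclosed : ∀ e ∈ (restrict p Λ).rel, p e.2) :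
    Ntrans n v (restrict p Λ) = Ntrans n v Λ := by
  induction n generalizing v with
  | zero => rw [Ntrans_zero, Ntrans_zero, restrict_restrict_of_imp fun a ha => ha ▸ hv]
  | succ n ih =>
    rw [Ntrans_succ, Ntrans_succ, restrict_restrict_of_imp fun a ha => ha ▸ hv]
    refine congrArg _ (List.map_congr_left fun e he => ?_)
    obtain ⟨heΛ, rfl⟩ := mem_rel_restrict.1 he
    rw [ih (hclosed e (mem_rel_restrict.2 ⟨heΛ, hv⟩))]

theorem restrict_Ltrans_root {w : Lab} {Γ Δ : Multiset Fml} {Θ : Multiset Var}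
    {cs : List (Lab × Nested Fml Var Lab)} (hw : ∀ c ∈ cs, w ∉ c.2.labels c.1) :
    restrict (· = w) (Ltrans w (.node Γ Θ Δ cs)) =
      ⟨cs.map fun c => (w, c.1), Θ.map (w, ·), Γ.map (w, ·), Δ.map (w, ·)⟩ := by
  have hchildren : ∀ c ∈ cs, restrict (· = w) (edge w c.1 * Ltrans c.1 c.2) = edge w c.1 :=
    fun c hc => by
      rw [restrict_mul, restrict_edge_of (p := (· = w)) rfl,
        restrict_eq_one (Ltrans_mem_supportedOn c.1 c.2)
          fun a ha (haw : a = w) => hw c hc (haw ▸ ha),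
        mul_one]
  rw [Ltrans_node, restrict_mul, restrict_list_prod, List.map_map, Function.comp_def,
    List.map_congr_left hchildren, prod_map_edge,
    restrict_eq_self (flat_mem_supportedOn (S := (· = w)) rfl Γ Θ Δ) fun _ h => h]
  simp [mul_def, flat]

theorem restrict_Ltrans_child {w : Lab} {Γ Δ : Multiset Fml} {Θ : Multiset Var}
    {l₁ l₂ : List (Lab × Nested Fml Var Lab)} {c : Lab × Nested Fml Var Lab}
    (h : ((Nested.node Γ Θ Δ (l₁ ++ c :: l₂)).labels w).Nodup) :
    restrict (· ∈ c.2.labels c.1) (Ltrans w (.node Γ Θ Δ (l₁ ++ c :: l₂))) = Ltrans c.1 c.2 := by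
  rw [(Nested.labels_node_perm w Γ Δ Θ l₁ l₂ c).nodup_iff, List.nodup_cons, List.nodup_append,
    List.mem_append, not_or] at h
  obtain ⟨⟨hw, -⟩, -, -, hdisj⟩ := h
  have hsiblings : ∀ d ∈ l₁ ++ l₂,
      restrict (· ∈ c.2.labels c.1) (edge w d.1 * Ltrans d.1 d.2) = 1 := fun d hd => by
    rw [restrict_mul, restrict_edge_of_not hw, restrict_eq_one (Ltrans_mem_supportedOn d.1 d.2)
      fun a ha hac => hdisj a hac a (List.mem_flatten.2 ⟨_, List.mem_map_of_mem hd, ha⟩) rfl,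
      mul_one]
  rw [Ltrans_node, restrict_mul, restrict_list_prod, List.map_map, List.map_append,
    List.map_cons, List.prod_append, List.prod_cons,
    List.prod_eq_one fun x hx => ?_, List.prod_eq_one fun x hx => ?_,
    restrict_eq_one (flat_mem_supportedOn (S := (· = w)) rfl Γ Θ Δ) fun a ha hac => hw (ha ▸ hac),
    Function.comp_apply, restrict_mul, restrict_edge_of_not hw,
    restrict_eq_self (Ltrans_mem_supportedOn c.1 c.2) fun _ h => h,
    one_mul, one_mul, mul_one, mul_one]
  all_goals
    obtain ⟨d, hd, rfl⟩ := List.mem_map.1 hx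
    exact hsiblings d (by simp [hd])

/-- the translations are mutually inverse on nested sequents:
for every nested sequent `Φ` (with pairwise distinct labels, root label `w₀`),
`𝔑(𝔏(Φ)) = Φ`. -/
theorem Ntrans_Ltrans (w₀ : Lab) (Φ : Nested Fml Var Lab)
    (hnd : (Φ.labels w₀).Nodup) :
    ∀ n : ℕ, Φ.height ≤ n → Ntrans n w₀ (Ltrans w₀ Φ) = Φ := by
  induction Φ generalizing w₀ with
  | node Γ Θ Δ cs ih =>
  rintro (_ | k) hk
  · rw [Nested.height] at hk
    omega
  rw [Ntrans_succ, restrict_Ltrans_root fun c hc => Nested.not_mem_labels_of_mem hnd hc]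
  simp only [Multiset.map_map, Function.comp_def, Multiset.map_id', List.map_map]
  refine congrArg _ ((List.map_congr_left fun c hc => ?_).trans (List.map_id cs))
  have hheight : c.2.height ≤ k := Nat.lt_succ_iff.1 ((Nested.height_lt_of_mem hc).trans_le hk)
  have hnd_c := Nested.nodup_labels_of_mem hnd hc
  obtain ⟨l₁, l₂, rfl⟩ := List.append_of_mem hc
  have hrestrict := restrict_Ltrans_child hnd
  have hclosed :
      ∀ e ∈ (restrict (· ∈ c.2.labels c.1) (Ltrans w₀ (.node Γ Θ Δ (l₁ ++ c :: l₂)))).rel,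
        e.2 ∈ c.2.labels c.1 := by
    rw [hrestrict]
    exact fun e he => ((Ltrans_mem_supportedOn c.1 c.2).1 e he).2
  rw [← Ntrans_restrict k (Nested.mem_labels_self c.1 c.2) hclosed, hrestrict,
    ih c hc c.1 hnd_c k hheight]
  rfl
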